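/- Let U = [[a, b], [c, d]] be a 2×2 unitary matrix with a ≠ 1 possible and det U = ad − bc. Then 1 is an eigenvalue of U if and only if 1 − (a + d) + det U = 0, which (writing det U = e^{iφ} and using unitarity d = e^{iφ} \bar{a}) is equivalent to the real scalar equation |a| sin((φ − π)/2 − arg a) = sin((φ − π)/2), up to the appropriate choice of branch of arg when a ≠ 0. -/

import Mathlib

/-!
The eigenvalue condition is `det (U - 1) = 0`, and for a 2×2 matrix
`det (U - 1) = 1 - tr U + det U`. Unitarity gives `adj U = det U • U⋆`, whose `(0,0)` entry
reads `d = det U · ā`. Writing `det U = w²` with `w = e^{iφ/2}` on the unit circle,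
`1 - (a + w² ā) + w² = 2w (Re w - Re (w ā))`, so the condition is the real equation
`|a| cos (φ/2 - arg a) = cos (φ/2)`, i.e. the sine equation after a shift by `π/2`.
-/

open Complex ComplexConjugate

namespace Matrix

theorem exists_mulVec_eq_self_iff_det_sub_one_eq_zero {n K : Type*} [Fintype n] [DecidableEq n]
    [CommRing K] [IsDomain K] (A : Matrix n n K) :
    (∃ v ≠ 0, A *ᵥ v = v) ↔ (A - 1).det = 0 := by
  simp_rw [← exists_mulVec_eq_zero_iff, sub_mulVec, one_mulVec, sub_eq_zero]

theorem det_sub_one_fin_two {R : Type*} [CommRing R] (A : Matrix (Fin 2) (Fin 2) R) :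
    (A - 1).det = 1 - (A 0 0 + A 1 1) + A.det := by
  simp only [det_fin_two, sub_apply, one_apply_eq, one_apply_ne zero_ne_one,
    one_apply_ne one_ne_zero]
  ring

theorem adjugate_eq_det_smul_star_of_mem_unitaryGroup {n α : Type*} [Fintype n] [DecidableEq n]
    [CommRing α] [StarRing α] {U : Matrix n n α} (hU : U ∈ unitaryGroup n α) :
    adjugate U = U.det • star U :=
  calc adjugate U = star U * U * adjugate U := by rw [hU.1, one_mul]
    _ = U.det • star U := by rw [mul_assoc, mul_adjugate, mul_smul_comm, mul_one]

theorem apply_one_one_eq_det_mul_star_of_mem_unitaryGroup {α : Type*} [CommRing α] [StarRing α]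
    {U : Matrix (Fin 2) (Fin 2) α} (hU : U ∈ unitaryGroup (Fin 2) α) :
    U 1 1 = U.det * star (U 0 0) := by
  simpa [adjugate_fin_two] using congr_fun₂ (adjugate_eq_det_smul_star_of_mem_unitaryGroup hU) 0 0

end Matrix

namespace Complex

theorem one_sub_add_sq_mul_conj_add_sq_eq_zero_iff {w : ℂ} (hw : ‖w‖ = 1) (a : ℂ) :
    1 - (a + w ^ 2 * conj a) + w ^ 2 = 0 ↔ (w * conj a).re = w.re := by
  have hw0 : w ≠ 0 := norm_ne_zero_iff.mp (by rw [hw]; exact one_ne_zero)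
  have hconj : conj w * w = 1 := by rw [mul_comm, mul_conj, normSq_eq_norm_sq, hw]; simp
  have hfactor :
      1 - (a + w ^ 2 * conj a) + w ^ 2 = 2 * w * ((w.re - (w * conj a).re : ℝ) : ℂ) := by
    rw [ofReal_sub, re_eq_add_conj, re_eq_add_conj, map_mul, conj_conj]
    linear_combination (a - 1) * hconj
  rw [hfactor, mul_eq_zero, or_iff_right (mul_ne_zero two_ne_zero hw0), ofReal_eq_zero,
    sub_eq_zero, eq_comm]

theorem one_sub_add_exp_mul_conj_add_exp_eq_zero_iff (a : ℂ) (φ : ℝ) :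
    1 - (a + exp (φ * I) * conj a) + exp (φ * I) = 0 ↔
      ‖a‖ * Real.sin ((φ - Real.pi) / 2 - arg a) = Real.sin ((φ - Real.pi) / 2) := by
  have hsq : exp (φ * I) = exp ((φ / 2 : ℝ) * I) ^ 2 := by
    rw [← exp_nat_mul]; push_cast; ring_nf
  -- `a = ‖a‖ e^{i arg a}` turns `w ā` into `‖a‖ e^{i (φ/2 - arg a)}`.
  have hre : (exp ((φ / 2 : ℝ) * I) * conj a).re = ‖a‖ * Real.cos (φ / 2 - arg a) := by
    have hexp : ((φ / 2 : ℝ) : ℂ) * I + arg a * -I = ((φ / 2 - arg a : ℝ) : ℂ) * I := by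
      push_cast; ring
    conv_lhs => rw [← norm_mul_exp_arg_mul_I a]
    rw [map_mul, conj_ofReal, ← exp_conj, map_mul, conj_ofReal, conj_I, mul_left_comm,
      ← exp_add, hexp, re_ofReal_mul, exp_ofReal_mul_I_re]
  rw [hsq, one_sub_add_sq_mul_conj_add_sq_eq_zero_iff (norm_exp_ofReal_mul_I _), hre,
    exp_ofReal_mul_I_re, show (φ - Real.pi) / 2 - arg a = (φ / 2 - arg a) - Real.pi / 2 by ring,
    show (φ - Real.pi) / 2 = φ / 2 - Real.pi / 2 by ring, Real.sin_sub_pi_div_two,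
    Real.sin_sub_pi_div_two, mul_neg, neg_inj]

end Complex

theorem stmt7_general (U : Matrix (Fin 2) (Fin 2) ℂ)
    (hU : U ∈ Matrix.unitaryGroup (Fin 2) ℂ) :
    ((∃ v : Fin 2 → ℂ, v ≠ 0 ∧ U.mulVec v = v) ↔
      1 - (U 0 0 + U 1 1) + U.det = 0) ∧
    U 1 1 = U.det * (starRingEnd ℂ) (U 0 0) ∧
    ((1 - (U 0 0 + U 1 1) + U.det = 0) ↔
      ‖U 0 0‖ *
          Real.sin ((Complex.arg U.det - Real.pi) / 2 - Complex.arg (U 0 0))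
        = Real.sin ((Complex.arg U.det - Real.pi) / 2)) := by
  have hd : U 1 1 = U.det * conj (U 0 0) :=
    Matrix.apply_one_one_eq_det_mul_star_of_mem_unitaryGroup hU
  have hdet : exp (arg U.det * I) = U.det := by
    simpa [CStarRing.norm_of_mem_unitary (Matrix.det_of_mem_unitary hU)] using
      norm_mul_exp_arg_mul_I U.det
  refine ⟨?_, hd, ?_⟩
  · rw [← Matrix.det_sub_one_fin_two]
    exact U.exists_mulVec_eq_self_iff_det_sub_one_eq_zero
  · rw [hd]
    simpa only [hdet] using one_sub_add_exp_mul_conj_add_exp_eq_zero_iff (U 0 0) (arg U.det)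

/-- For a 2×2 unitary `U = [[a,b],[c,d]]`: `1` is an eigenvalue of `U` iff
`1 - (a+d) + det U = 0`; unitarity gives `d = det U · conj a`; and (when `a ≠ 0`)
the condition is equivalent to the real scalar equation
`|a| sin((φ-π)/2 - arg a) = sin((φ-π)/2)` with `φ = arg det U`. -/
theorem stmt7 (U : Matrix (Fin 2) (Fin 2) ℂ)
    (hU : U ∈ Matrix.unitaryGroup (Fin 2) ℂ) (ha : U 0 0 ≠ 0) :
    ((∃ v : Fin 2 → ℂ, v ≠ 0 ∧ U.mulVec v = v) ↔
      1 - (U 0 0 + U 1 1) + U.det = 0) ∧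
    U 1 1 = U.det * (starRingEnd ℂ) (U 0 0) ∧
    ((1 - (U 0 0 + U 1 1) + U.det = 0) ↔
      ‖U 0 0‖ *
          Real.sin ((Complex.arg U.det - Real.pi) / 2 - Complex.arg (U 0 0))
        = Real.sin ((Complex.arg U.det - Real.pi) / 2)) :=
  stmt7_general U hU
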